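/- Fix $n > 4$, an integer $k < n$, a configuration $\mathbf{x} \in \mathcal{C}^n$, and sample $k$ coordinates of $\mathbf{x}$ uniformly at random without replacement to form $\mathbf{x}^{(k)}$. Then with probability at least $1 - 1/n^3$, $\sup_I \bigl| |V_I(\mathbf{x}^{(k)})| - \frac{k}{n}|V_I(\mathbf{x})| \bigr| \leq 6\sqrt{n \log n}$, where the supremum is over all closed intervals $I$ of the torus $\mathbb{R}/(2\pi)$ and $V_I(\mathbf{y}) = N_I(\mathbf{y}) - (\text{length}(\mathbf{y}))|I|/(2\pi)$ with $N_I$ the number of points with argument in $I$. -/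

import Mathlib

open Real Finset

/-- Number of points of `x` with index in `S` lying in the closed arc of the
circle starting at angle `a` and of length `ℓ`. -/
noncomputable def NArcS (n : ℕ) (x : Fin n → Circle) (S : Finset (Fin n)) (a ℓ : ℝ) : ℕ :=
  Nat.card {i : Fin n // i ∈ S ∧ ∃ t ∈ Set.Icc (0 : ℝ) ℓ, x i = Circle.exp (a + t)}

/-- Arc discrepancy `V_I = N_I - |S| |I| / (2π)` of the sub-configuration
indexed by `S`, for the arc of initial angle `a` and length `ℓ`. -/
noncomputable def VArcS (n : ℕ) (x : Fin n → Circle) (S : Finset (Fin n)) (a ℓ : ℝ) : ℝ :=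
  (NArcS n x S a ℓ : ℝ) - S.card * ℓ / (2 * π)

/-!
Fix a set `B` of `m` indices and let `μ = k m / n`. Exactly `C(m, j) C(n - m, k - j)` of the
`k`-subsets meet `B` in `j` points; beyond the mean consecutive terms shrink by a factor
`1 - (j - μ) / n`, so the term at `j = μ + s` is at most `C(n, k) exp(-s (s - 1) / (2 n))`, which is
below `C(n, k) / (2 n⁶)` once `s > 6 √(n log n)`. Summing over `j`, and passing to `Bᶜ` for the
lower tail, `|#(S ∩ B) - μ| > 6 √(n log n)` for at most `C(n, k) / n⁵` of the subsets `S`.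

The length terms cancel in `V_I(x_S) - (k / n) V_I(x)`, which leaves the deviation of `#(S ∩ B)`
for `B` the indices of the points in `I`. Shrinking `I` to the arc between its first and its last
point shows that every nonempty such `B` is cut out by an arc from some `x j` to some `x l`, and a
union bound over these `n²` arcs gives the probability `1 - 1 / n³`.
-/

namespace Nat

theorem choose_mul_choose_le_choose {n m k j : ℕ} (hm : m ≤ n) (hj : j ≤ k) :
    m.choose j * (n - m).choose (k - j) ≤ n.choose k := by
  conv_rhs => rw [← Nat.add_sub_cancel' hm, Nat.add_choose_eq]
  have hmem : (j, k - j) ∈ antidiagonal k := mem_antidiagonal.mpr (Nat.add_sub_cancel' hj)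
  exact single_le_sum (f := fun p : ℕ × ℕ => m.choose p.1 * (n - m).choose p.2)
    (fun _ _ => Nat.zero_le _) hmem

theorem succ_mul_choose_mul_choose_succ {n m k j : ℕ} (hjk : j < k) :
    (j + 1) * (n - m - (k - (j + 1))) * (m.choose (j + 1) * (n - m).choose (k - (j + 1))) =
      (m - j) * (k - j) * (m.choose j * (n - m).choose (k - j)) := by
  have h := Nat.choose_succ_right_eq (n - m) (k - (j + 1))
  rw [show k - (j + 1) + 1 = k - j by omega] at h
  calc _ = m.choose (j + 1) * (j + 1) *
        ((n - m).choose (k - (j + 1)) * (n - m - (k - (j + 1)))) := by ring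
    _ = m.choose j * (m - j) * ((n - m).choose (k - j) * (k - j)) := by
        rw [Nat.choose_succ_right_eq, ← h]
    _ = _ := by ring

theorem choose_mul_choose_succ_le {n m k j : ℕ} (hn : 0 < n) (hk : k ≤ n) (hm : m ≤ n)
    (hjk : j < k) (hj : (k * m / n : ℝ) ≤ j) :
    (m.choose (j + 1) * (n - m).choose (k - (j + 1)) : ℝ) ≤
      m.choose j * (n - m).choose (k - j) * (1 - (j - k * m / n) / n) := by
  have hn' : (0 : ℝ) < n := by exact_mod_cast hn
  have hkR : (k : ℝ) ≤ n := by exact_mod_cast hk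
  have hmR : (m : ℝ) ≤ n := by exact_mod_cast hm
  have hjR : (j : ℝ) + 1 ≤ k := by exact_mod_cast hjk
  set s : ℝ := j - k * m / n with hs
  have hns : n * s = j * n - k * m := by rw [hs]; field_simp
  have hs0 : 0 ≤ s := sub_nonneg.mpr hj
  have hfac : 0 ≤ 1 - s / n := by
    rw [sub_nonneg, div_le_one hn']
    nlinarith
  set c₀ : ℝ := m.choose j * (n - m).choose (k - j)
  rcases le_or_gt m j with hmj | hjm
  · rw [Nat.choose_eq_zero_of_lt (by omega : m < j + 1), Nat.cast_zero, zero_mul]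
    positivity
  -- `(n - k) (n - m) ≥ 0` and `k m ≤ j n` give `k + m ≤ n + j`: no subtraction below truncates
  have hkmR : (k : ℝ) + m ≤ n + j := by
    nlinarith [mul_nonneg (sub_nonneg.mpr hkR) (sub_nonneg.mpr hmR)]
  have hkm : k + m ≤ n + j := by exact_mod_cast hkmR
  have hstep := congrArg (Nat.cast : ℕ → ℝ)
    (succ_mul_choose_mul_choose_succ (n := n) (m := m) hjk)
  push_cast [Nat.cast_sub hm, Nat.cast_sub hjm.le, Nat.cast_sub hjk.le, Nat.cast_sub hjk,
    Nat.cast_sub (show k - (j + 1) ≤ n - m by omega)] at hstep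
  set D : ℝ := (j + 1) * (n - m - (k - (j + 1)))
  have hD0 : 0 < D := mul_pos (by positivity) (by linarith)
  have hDn : D ≤ n * n := mul_le_mul (by linarith) (by linarith) (by linarith) hn'.le
  -- `D - (m - j) (k - j) = n s + (n + 2 j + 1 - m - k)` and `D ≤ n²`
  have hkey : ((m : ℝ) - j) * (k - j) ≤ D * (1 - s / n) := by
    have : s * D / n ≤ n * s := by
      rw [div_le_iff₀ hn']
      nlinarith
    have : D * (1 - s / n) = D - s * D / n := by ring
    nlinarith
  refine le_of_mul_le_mul_right ?_ hD0
  calc _ = ((m : ℝ) - j) * (k - j) * c₀ := by linarith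
    _ ≤ D * (1 - s / n) * c₀ := by gcongr
    _ = _ := by ring

theorem choose_mul_choose_le_choose_mul_exp {n m k j : ℕ} (hn : 0 < n) (hk : k ≤ n)
    (hm : m ≤ n) (hjk : j ≤ k) (hj : (k * m / n : ℝ) < j) :
    (m.choose j * (n - m).choose (k - j) : ℝ) ≤
      n.choose k * Real.exp (-((j - k * m / n) * (j - k * m / n - 1)) / (2 * n)) := by
  induction j with
  | zero => exact absurd hj (by simp; positivity)
  | succ j ih =>
    push_cast at hj ⊢
    rcases le_or_gt (j : ℝ) (k * m / n) with hjμ | hμj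
    -- `j ≤ μ < j + 1`: the exponent is nonnegative and Vandermonde suffices
    · calc (m.choose (j + 1) * (n - m).choose (k - (j + 1)) : ℝ)
          ≤ n.choose k := by exact_mod_cast choose_mul_choose_le_choose hm hjk
        _ ≤ _ := by
          refine le_mul_of_one_le_right (by positivity) (one_le_exp ?_)
          rw [neg_div, neg_nonneg]
          apply div_nonpos_of_nonpos_of_nonneg _ (by positivity)
          nlinarith
    · set s : ℝ := j - k * m / n
      have hn' : (0 : ℝ) < n := by exact_mod_cast hn
      calc (m.choose (j + 1) * (n - m).choose (k - (j + 1)) : ℝ)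
          ≤ m.choose j * (n - m).choose (k - j) * (1 - s / n) :=
            choose_mul_choose_succ_le hn hk hm hjk hμj.le
        _ ≤ m.choose j * (n - m).choose (k - j) * Real.exp (-(s / n)) := by
            gcongr
            linarith [add_one_le_exp (-(s / n))]
        _ ≤ n.choose k * Real.exp (-(s * (s - 1)) / (2 * n)) * Real.exp (-(s / n)) := by
            exact mul_le_mul_of_nonneg_right (ih (by omega) hμj) (exp_nonneg _)
        _ = _ := by
            rw [mul_assoc, ← Real.exp_add, show (j : ℝ) + 1 - k * m / n = s + 1 by ring]
            congr 2
            field_simp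
            ring

end Nat

theorem exp_le_one_div_of_six_sqrt_lt {n : ℕ} (hn : 2 ≤ n) {s : ℝ}
    (hs : 6 * √(n * log n) < s) :
    exp (-(s * (s - 1)) / (2 * n)) ≤ 1 / (2 * n ^ 6) := by
  have hn' : (2 : ℝ) ≤ n := by exact_mod_cast hn
  have hlog : log 2 ≤ log n := log_le_log (by norm_num) hn'
  have hlog2 : 0.69 < log 2 := by linarith [log_two_gt_d9]
  have hq : √(n * log n) ^ 2 = n * log n := sq_sqrt (by positivity)
  have hq1 : 1 ≤ √(n * log n) := by nlinarith [sqrt_nonneg (n * log n)]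
  -- `s > 6 q ≥ 6` for `q = √(n log n)`, so `s (s - 1) ≥ 30 q² = 30 n log n`
  have key : 2 * n * (log 2 + 6 * log n) ≤ s * (s - 1) := by nlinarith
  calc exp (-(s * (s - 1)) / (2 * n)) ≤ exp (-(log 2 + 6 * log n)) := by
        rw [exp_le_exp, neg_div, neg_le_neg_iff, le_div_iff₀ (by positivity)]
        linarith
    _ = 1 / (2 * n ^ 6) := by
        have hlog_eq : log 2 + 6 * log n = log (2 * n ^ 6) := by
          rw [log_mul (by norm_num) (by positivity), log_pow]
          push_cast
          ring
        rw [hlog_eq, exp_neg, exp_log (by positivity), one_div]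

section Sampling

variable {α : Type*} [DecidableEq α] {n k : ℕ}

/-- `#(S ∩ B)` minus its mean `k #B / n` when `S` is a uniformly random `k`-subset of an
`n`-element type. -/
noncomputable def sampleDeviation (n k : ℕ) (S B : Finset α) : ℝ := #(S ∩ B) - k * #B / n

@[simp]
theorem sampleDeviation_empty (S : Finset α) : sampleDeviation n k S ∅ = 0 := by
  simp [sampleDeviation]

variable [Fintype α]

theorem card_powersetCard_filter_card_inter_eq_le (B : Finset α) (j : ℕ) :
    #{S ∈ powersetCard k univ | #(S ∩ B) = j} ≤
      (#B).choose j * (Fintype.card α - #B).choose (k - j) := by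
  calc _ ≤ #(B.powersetCard j ×ˢ Bᶜ.powersetCard (k - j)) := by
        refine card_le_card_of_injOn (fun S => (S ∩ B, S \ B)) (fun S hS => ?_)
          fun S _ T _ h => ?_
        · rw [mem_coe, mem_filter, mem_powersetCard] at hS
          rw [mem_coe, mem_product, mem_powersetCard, mem_powersetCard]
          refine ⟨⟨inter_subset_right, hS.2⟩, fun i hi => mem_compl.mpr (mem_sdiff.mp hi).2,
            ?_⟩
          show #(S \ B) = k - j
          have := card_inter_add_card_sdiff S B
          omega
        · rw [← sup_inf_sdiff S B, ← sup_inf_sdiff T B]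
          simp only [Prod.mk.injEq] at h
          exact congrArg₂ (· ⊔ ·) h.1 h.2
    _ = _ := by rw [card_product, card_powersetCard, card_powersetCard, card_compl]

theorem sampleDeviation_compl (hα : Fintype.card α = n) (hn : 0 < n) {S : Finset α}
    (hS : #S = k) (B : Finset α) : sampleDeviation n k S Bᶜ = -sampleDeviation n k S B := by
  have hsplit := card_inter_add_card_sdiff S B
  rw [sdiff_eq_inter_compl, hS] at hsplit
  have hB := card_compl B
  rw [hα] at hB
  have hBn : #B ≤ n := hα ▸ card_le_univ B
  rw [sampleDeviation, sampleDeviation, hB, Nat.cast_sub hBn,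
    show (#(S ∩ Bᶜ) : ℝ) = k - #(S ∩ B) by rw [← hsplit]; push_cast; ring]
  field_simp
  ring

theorem card_filter_lt_sampleDeviation_le (hα : Fintype.card α = n) (hn : 2 ≤ n) (hk : k < n)
    (B : Finset α) :
    (#{S ∈ powersetCard k univ | 6 * √(n * log n) < sampleDeviation n k S B} : ℝ) ≤
      n.choose k / (2 * n ^ 5) := by
  set T := 6 * √(n * log n)
  set μ : ℝ := k * #B / n
  set J := (range (k + 1)).filter fun j : ℕ => μ + T < j
  have hcover : {S ∈ powersetCard k (univ : Finset α) | T < sampleDeviation n k S B} ⊆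
      J.biUnion fun j => {S ∈ powersetCard k univ | #(S ∩ B) = j} := by
    intro S hS
    rw [mem_filter, mem_powersetCard] at hS
    have hdev : sampleDeviation n k S B = #(S ∩ B) - μ := rfl
    have := card_le_card (inter_subset_left (s₁ := S) (s₂ := B))
    refine mem_biUnion.mpr ⟨#(S ∩ B), mem_filter.mpr ⟨mem_range.mpr (by omega), by linarith⟩,
      mem_filter.mpr ⟨mem_powersetCard.mpr hS.1, rfl⟩⟩
  have hfiber : ∀ j ∈ J, (#{S ∈ powersetCard k univ | #(S ∩ B) = j} : ℝ) ≤
      n.choose k / (2 * n ^ 6) := by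
    intro j hj
    rw [mem_filter, mem_range] at hj
    have hBn : #B ≤ n := hα ▸ card_le_univ B
    calc (#{S ∈ powersetCard k univ | #(S ∩ B) = j} : ℝ)
        ≤ (#B).choose j * (n - #B).choose (k - j) := by
          exact_mod_cast hα ▸ card_powersetCard_filter_card_inter_eq_le B j
      _ ≤ n.choose k * exp (-((j - μ) * (j - μ - 1)) / (2 * n)) :=
          Nat.choose_mul_choose_le_choose_mul_exp (by omega) hk.le hBn (by omega)
            (by linarith [show 0 ≤ T by positivity])
      _ ≤ n.choose k * (1 / (2 * n ^ 6)) := by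
          gcongr
          exact exp_le_one_div_of_six_sqrt_lt hn (by linarith)
      _ = _ := by ring
  calc _ ≤ ∑ j ∈ J, (#{S ∈ powersetCard k univ | #(S ∩ B) = j} : ℝ) := by
        exact_mod_cast (card_le_card hcover).trans card_biUnion_le
    _ ≤ ∑ j ∈ J, (n.choose k / (2 * n ^ 6) : ℝ) := sum_le_sum hfiber
    _ ≤ ∑ j ∈ range (k + 1), (n.choose k / (2 * n ^ 6) : ℝ) :=
        sum_le_sum_of_subset_of_nonneg (filter_subset _ _) fun _ _ _ => by positivity
    _ ≤ n * (n.choose k / (2 * n ^ 6)) := by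
        rw [sum_const, card_range, nsmul_eq_mul]
        gcongr
        exact_mod_cast hk
    _ = _ := by field_simp

theorem card_filter_lt_abs_sampleDeviation_le (hα : Fintype.card α = n) (hn : 2 ≤ n)
    (hk : k < n) (B : Finset α) :
    (#{S ∈ powersetCard k univ | 6 * √(n * log n) < |sampleDeviation n k S B|} : ℝ) ≤
      n.choose k / n ^ 5 := by
  set T := 6 * √(n * log n)
  calc _ ≤ (#{S ∈ powersetCard k univ | T < sampleDeviation n k S B} : ℝ) +
        #{S ∈ powersetCard k univ | T < sampleDeviation n k S Bᶜ} := by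
        norm_cast
        refine (card_le_card fun S hS => ?_).trans (card_union_le _ _)
        rw [mem_filter, mem_powersetCard] at hS
        rw [mem_union, mem_filter, mem_filter, mem_powersetCard,
          sampleDeviation_compl hα (by omega) hS.1.2]
        rcases lt_abs.mp hS.2 with h | h
        exacts [Or.inl ⟨hS.1, h⟩, Or.inr ⟨hS.1, h⟩]
    _ ≤ n.choose k / (2 * n ^ 5) + n.choose k / (2 * n ^ 5) :=
        add_le_add (card_filter_lt_sampleDeviation_le hα hn hk B)
          (card_filter_lt_sampleDeviation_le hα hn hk Bᶜ)
    _ = _ := by ring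

theorem one_sub_div_pow_mul_choose_le_card_filter {ι : Type*} [Fintype ι]
    (hα : Fintype.card α = n) (hn : 2 ≤ n) (hk : k < n) (B : ι → Finset α)
    (hι : Fintype.card ι ≤ n ^ 2) :
    (1 - 1 / (n : ℝ) ^ 3) * n.choose k ≤
      #{S ∈ powersetCard k univ |
        ∀ p, |sampleDeviation n k S (B p)| ≤ 6 * √(n * log n)} := by
  set T := 6 * √(n * log n)
  have hsplit := card_filter_add_card_filter_not (s := powersetCard k univ)
    (fun S => ∀ p, |sampleDeviation n k S (B p)| ≤ T)
  rw [card_powersetCard, card_univ, hα] at hsplit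
  have hbad :
      {S ∈ powersetCard k (univ : Finset α) | ¬∀ p, |sampleDeviation n k S (B p)| ≤ T} ⊆
      univ.biUnion fun p => {S ∈ powersetCard k univ | T < |sampleDeviation n k S (B p)|} := by
    intro S hS
    simp only [mem_filter, not_forall, not_le] at hS
    obtain ⟨hS, p, hp⟩ := hS
    exact mem_biUnion.mpr ⟨p, mem_univ p, mem_filter.mpr ⟨hS, hp⟩⟩
  have hbad_card :
      (#{S ∈ powersetCard k univ | ¬∀ p, |sampleDeviation n k S (B p)| ≤ T} : ℝ) ≤
        n.choose k / n ^ 3 := by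
    have hn' : (0 : ℝ) < n := by positivity
    calc _ ≤ ∑ p, (#{S ∈ powersetCard k univ | T < |sampleDeviation n k S (B p)|} : ℝ) := by
          exact_mod_cast (card_le_card hbad).trans card_biUnion_le
      _ ≤ ∑ _p : ι, (n.choose k / n ^ 5 : ℝ) :=
          sum_le_sum fun p _ => card_filter_lt_abs_sampleDeviation_le hα hn hk (B p)
      _ ≤ n ^ 2 * (n.choose k / n ^ 5) := by
          rw [sum_const, card_univ, nsmul_eq_mul]
          gcongr
          exact_mod_cast hι
      _ = _ := by field_simp
  have htotal : (#{S ∈ powersetCard k univ | ∀ p, |sampleDeviation n k S (B p)| ≤ T} : ℝ) +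
      #{S ∈ powersetCard k univ | ¬∀ p, |sampleDeviation n k S (B p)| ≤ T} = n.choose k := by
    exact_mod_cast hsplit
  calc (1 - 1 / (n : ℝ) ^ 3) * n.choose k = n.choose k - n.choose k / n ^ 3 := by ring
    _ ≤ _ := by linarith

end Sampling

namespace Circle

theorem angleDiff_eq_of_exp_mul {y z : Circle} {t : ℝ} (ht : t ∈ Set.Ico 0 (2 * π))
    (hz : exp t * y = z) : angleDiff y z = t := by
  obtain ⟨m, hm⟩ := exp_eq_exp.mp (mul_right_cancel (exp_angleDiff_mul.trans hz.symm))
  have h0 := angleDiff_nonneg y z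
  have h2 := angleDiff_lt_two_pi y z
  have hlo : (-1 : ℝ) < m := by nlinarith [ht.1, ht.2, pi_pos]
  have hhi : (m : ℝ) < 1 := by nlinarith [ht.1, ht.2, pi_pos]
  obtain rfl : m = 0 := by
    have : -1 < m := by exact_mod_cast hlo
    have : m < 1 := by exact_mod_cast hhi
    omega
  simpa using hm

theorem angleDiff_le_iff {y z : Circle} {ℓ : ℝ} (hℓ : ℓ ≤ 2 * π) :
    angleDiff y z ≤ ℓ ↔ ∃ t ∈ Set.Icc 0 ℓ, z = exp t * y := by
  refine ⟨fun h => ⟨angleDiff y z, ⟨angleDiff_nonneg y z, h⟩, exp_angleDiff_mul.symm⟩,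
    ?_⟩
  rintro ⟨t, ⟨ht0, htℓ⟩, rfl⟩
  rcases (htℓ.trans hℓ).lt_or_eq with ht | rfl
  · rw [angleDiff_eq_of_exp_mul ⟨ht0, ht⟩ rfl]
    exact htℓ
  · rw [exp_two_pi, one_mul, angleDiff_eq_of_exp_mul ⟨le_rfl, two_pi_pos⟩ (by simp)]
    exact ht0.trans htℓ

theorem angleDiff_eq_sub_of_le {y u v : Circle} (h : angleDiff y u ≤ angleDiff y v) :
    angleDiff u v = angleDiff y v - angleDiff y u := by
  refine angleDiff_eq_of_exp_mul ⟨by linarith, ?_⟩ ?_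
  · linarith [angleDiff_lt_two_pi y v, angleDiff_nonneg y u]
  · calc exp (angleDiff y v - angleDiff y u) * u
        = exp (angleDiff y v - angleDiff y u) * (exp (angleDiff y u) * y) := by
          rw [exp_angleDiff_mul]
      _ = v := by rw [← mul_assoc, ← exp_add, sub_add_cancel, exp_angleDiff_mul]

theorem angleDiff_eq_sub_add_two_pi_of_lt {y u v : Circle} (h : angleDiff y v < angleDiff y u) :
    angleDiff u v = angleDiff y v - angleDiff y u + 2 * π := by
  refine angleDiff_eq_of_exp_mul ⟨by linarith [angleDiff_lt_two_pi y u, angleDiff_nonneg y v],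
    by linarith⟩ ?_
  calc exp (angleDiff y v - angleDiff y u + 2 * π) * u
      = exp (angleDiff y v - angleDiff y u) * (exp (angleDiff y u) * y) := by
        rw [exp_add_two_pi, exp_angleDiff_mul]
    _ = v := by rw [← mul_assoc, ← exp_add, sub_add_cancel, exp_angleDiff_mul]

end Circle

section Arcs

open Circle

variable {ι : Type*} [Fintype ι]

noncomputable def arcIndices (x : ι → Circle) (y : Circle) (ℓ : ℝ) : Finset ι :=
  {i | angleDiff y (x i) ≤ ℓ}

theorem exists_arcIndices_eq {x : ι → Circle} {y : Circle} {ℓ : ℝ}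
    (hne : (arcIndices x y ℓ).Nonempty) :
    ∃ j l, arcIndices x y ℓ = arcIndices x (x j) (angleDiff (x j) (x l)) := by
  obtain ⟨j, hj, hjmin⟩ := exists_min_image _ (fun i => angleDiff y (x i)) hne
  obtain ⟨l, hl, hlmax⟩ := exists_max_image _ (fun i => angleDiff y (x i)) hne
  -- Shrink the arc to run from its first point `x j` to its last point `x l`.
  refine ⟨j, l, Finset.ext fun i => ?_⟩
  simp only [arcIndices, mem_filter, mem_univ, true_and] at hj hl hjmin hlmax ⊢
  rw [angleDiff_eq_sub_of_le (hjmin l hl)]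
  refine ⟨fun hi => ?_, fun hi => ?_⟩
  · rw [angleDiff_eq_sub_of_le (hjmin i hi)]
    linarith [hlmax i hi]
  · rcases le_or_gt (angleDiff y (x j)) (angleDiff y (x i)) with hji | hij
    · rw [angleDiff_eq_sub_of_le hji] at hi
      linarith
    · rw [angleDiff_eq_sub_add_two_pi_of_lt hij] at hi
      linarith [angleDiff_nonneg y (x i), angleDiff_lt_two_pi y (x l)]

theorem NArcS_eq_card_inter {n : ℕ} (x : Fin n → Circle) (S : Finset (Fin n)) (a : ℝ)
    {ℓ : ℝ} (hℓ : ℓ ≤ 2 * π) : NArcS n x S a ℓ = #(S ∩ arcIndices x (exp a) ℓ) := by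
  classical
  rw [NArcS, Nat.card_eq_fintype_card, Fintype.card_subtype]
  congr 1
  ext i
  simp [arcIndices, angleDiff_le_iff hℓ, Circle.exp_add, mul_comm]

theorem abs_abs_VArcS_sub_le {n k : ℕ} (hn : 0 < n) (x : Fin n → Circle) {S : Finset (Fin n)}
    (hS : #S = k) (a : ℝ) {ℓ : ℝ} (hℓ : ℓ ≤ 2 * π) :
    |(|VArcS n x S a ℓ| - (k : ℝ) / n * |VArcS n x univ a ℓ|)| ≤
      |sampleDeviation n k S (arcIndices x (exp a) ℓ)| := by
  calc _ = |(|VArcS n x S a ℓ| - |(k : ℝ) / n * VArcS n x univ a ℓ|)| := by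
        rw [abs_mul, abs_of_nonneg (by positivity : (0 : ℝ) ≤ k / n)]
    _ ≤ |VArcS n x S a ℓ - (k : ℝ) / n * VArcS n x univ a ℓ| :=
        abs_abs_sub_abs_le_abs_sub _ _
    _ = _ := by
        rw [VArcS, VArcS, NArcS_eq_card_inter x S a hℓ, NArcS_eq_card_inter x univ a hℓ,
          univ_inter, card_univ, Fintype.card_fin, hS, sampleDeviation]
        congr 1
        field_simp
        ring

end Arcs

/-- Uniform concentration of the arc discrepancies under sampling without
replacement (Lemma B.7 of the paper): for a uniformly random subset `S` of
size `k`, with probability at least `1 - 1/n³`, simultaneously over all arcs,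
`| |V_I(x_S)| - (k/n) |V_I(x)| | ≤ 6 √(n log n)`.  The probability statement
is expressed by counting the favourable `k`-subsets among the `n.choose k`
possible ones. -/
theorem stmt18 (n k : ℕ) (hn : 4 < n) (hk : k < n) (x : Fin n → Circle) :
    (1 - 1 / (n : ℝ) ^ 3) * (n.choose k) ≤
      Nat.card {S : Finset (Fin n) // S.card = k ∧
        ∀ a : ℝ, ∀ ℓ ∈ Set.Icc (0 : ℝ) (2 * π),
          |(|VArcS n x S a ℓ| - (k : ℝ) / n * |VArcS n x Finset.univ a ℓ|)|
            ≤ 6 * Real.sqrt (n * Real.log n) } := by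
  classical
  let B : Fin n × Fin n → Finset (Fin n) := fun p =>
    arcIndices x (x p.1) (Circle.angleDiff (x p.1) (x p.2))
  refine (one_sub_div_pow_mul_choose_le_card_filter (Fintype.card_fin n) (by omega) hk B
    (by simp [sq])).trans ?_
  rw [Nat.card_eq_fintype_card, Fintype.card_subtype, Nat.cast_le]
  refine card_le_card fun S hS => ?_
  rw [mem_filter, mem_powersetCard] at hS
  obtain ⟨⟨-, hSk⟩, hdev⟩ := hS
  refine mem_filter.mpr ⟨mem_univ S, hSk, fun a ℓ hℓ =>
    (abs_abs_VArcS_sub_le (by omega) x hSk a hℓ.2).trans ?_⟩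
  rcases (arcIndices x (Circle.exp a) ℓ).eq_empty_or_nonempty with h | h
  · rw [h, sampleDeviation_empty, abs_zero]
    positivity
  · obtain ⟨j, l, hjl⟩ := exists_arcIndices_eq h
    exact hjl ▸ hdev (j, l)
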